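/- Correctness of dynamic programming based power allocation: Assume the weights Q_1, …, Q_K are pairwise distinct, and let Ẽ = E ∩ [0, P_max] (which contains 0 and P_max, hence is nonempty) with elements listed in increasing order as π_1 < ⋯ < π_L. Then F attains its maximum over D, and max_{p ∈ D} F(p) = max over l ∈ {1, …, L} of H(l, K). -/

import Mathlib

/-! `F` is continuous on the compact set `D`, so it has a maximiser `p`. Summation by parts writes
`F(p) = Σ_{m<K} (W_m(S_{m+1}) − W_{m+1}(S_{m+1})) − W_0(0)` with `W_m(u) = Q_m log(u g_m + η)` for
`m < K` and `W_K(u) = Z u`. Take a maximal run `S_i = ⋯ = S_j = t` of equal prefix sums with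
`0 < t < P_max`: moving all of them to a common nearby value `u` keeps `p` feasible and changes `F`
by `W_{i-1}(u) − W_j(u)` only, so this function has a local maximum at `t` and its derivative
vanishes there. That equation forces `t` to be one of the critical points collected in `E`. Hence
every prefix sum of `p` lies in `Ẽ`, so `p` is admissible for the subproblem of the `l` with
`π_l = S_K(p)` and `H(l) = F(p)`, while every `H(l')` is a value of `F` on `D`. -/
open Finset

/-- Prefix sum `S_k(p) = p_1 + ⋯ + p_k` (0-based: sum of the first `k` coordinates). -/
noncomputable def Sfun (K : ℕ) (p : Fin K → ℝ) (k : ℕ) : ℝ :=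
  ∑ j : Fin K, if (j : ℕ) < k then p j else 0

/-- The NOMA objective `F`. -/
noncomputable def Fobj (K : ℕ) (g Q : Fin K → ℝ) (η Z : ℝ) (p : Fin K → ℝ) : ℝ :=
  (∑ k : Fin K, Q k * Real.log (1 + p k * g k / (Sfun K p (k : ℕ) * g k + η)))
    - Z * Sfun K p K

/-- The feasible set `D`. -/
def Dfeas (K : ℕ) (Pmax : ℝ) : Set (Fin K → ℝ) :=
  {p | (∀ k, 0 ≤ p k) ∧ Sfun K p K ≤ Pmax}

/-- The finite candidate set `E`. -/
def Ecand (K : ℕ) (g Q : Fin K → ℝ) (η Z Pmax : ℝ) : Set ℝ :=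
  ({0, Pmax} : Set ℝ)
    ∪ {x | ∃ i j : Fin K, i < j ∧
        x = η * (g j * Q j - g i * Q i) / (g i * g j * (Q i - Q j))}
    ∪ {x | ∃ i : Fin K, x = Q i / Z - η / g i}

/-- `f_k(s, q) = Q_k log(1 + q g_k / (s g_k + η)) − Z q`. -/
noncomputable def ff (K : ℕ) (g Q : Fin K → ℝ) (η Z : ℝ) (j : Fin K) (s q : ℝ) : ℝ :=
  Q j * Real.log (1 + q * g j / (s * g j + η)) - Z * q

/-- `G_k(p_1, …, p_k) = Σ_{j=1}^k f_j(S_{j−1}, p_j)`; note `G_K = F`. -/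
noncomputable def Gfun (K : ℕ) (g Q : Fin K → ℝ) (η Z : ℝ) (k : ℕ) (p : Fin K → ℝ) : ℝ :=
  ∑ j : Fin K, if (j : ℕ) < k then ff K g Q η Z j (Sfun K p (j : ℕ)) (p j) else 0

namespace DPPA

variable {K : ℕ}

section PrefixSums

variable (p : Fin K → ℝ)

@[simp] lemma Sfun_zero : Sfun K p 0 = 0 := by simp [Sfun]

lemma Sfun_self : Sfun K p K = ∑ j, p j :=
  Finset.sum_congr rfl fun j _ => if_pos j.isLt

lemma Sfun_succ (k : Fin K) : Sfun K p (k + 1) = Sfun K p k + p k := by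
  have hsplit : ∀ j : Fin K, (if (j : ℕ) < k + 1 then p j else 0)
      = (if (j : ℕ) < k then p j else 0) + if k = j then p j else 0 := by
    intro j
    rcases lt_trichotomy (j : ℕ) k with h | h | h
    · rw [if_pos (by omega), if_pos h, if_neg (by omega)]; ring
    · rw [if_pos (by omega), if_neg (by omega), if_pos (Fin.ext h.symm)]; ring
    · rw [if_neg (by omega), if_neg (by omega), if_neg (by omega)]; ring
  simp only [Sfun, hsplit, Finset.sum_add_distrib, Finset.sum_ite_eq, Finset.mem_univ, if_true]

variable {p}

lemma Sfun_mono (hp : ∀ k, 0 ≤ p k) : Monotone (Sfun K p) := fun m m' hmm' =>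
  Finset.sum_le_sum fun j _ => by
    split_ifs <;> first | rfl | exact hp j | omega

lemma Sfun_nonneg (hp : ∀ k, 0 ≤ p k) (m : ℕ) : 0 ≤ Sfun K p m :=
  Sfun_zero p ▸ Sfun_mono hp m.zero_le

lemma le_Sfun_self (hp : ∀ k, 0 ≤ p k) (k : Fin K) : p k ≤ Sfun K p K :=
  Sfun_self p ▸ Finset.single_le_sum (fun j _ => hp j) (Finset.mem_univ k)

lemma continuous_Sfun (m : ℕ) : Continuous fun p : Fin K → ℝ => Sfun K p m :=
  continuous_finsetSum _ fun j _ => by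
    split_ifs
    · exact continuous_apply j
    · exact continuous_const

end PrefixSums

def prefixDiff (K : ℕ) (w : ℕ → ℝ) : Fin K → ℝ := fun k => w (k + 1) - w k

lemma Sfun_prefixDiff {w : ℕ → ℝ} (h0 : w 0 = 0) :
    ∀ n ≤ K, Sfun K (prefixDiff K w) n = w n
  | 0, _ => by rw [Sfun_zero, h0]
  | n + 1, hn => by
    rw [Sfun_succ _ ⟨n, hn⟩, Sfun_prefixDiff h0 n (by omega)]
    simp [prefixDiff]

lemma prefixDiff_nonneg {w : ℕ → ℝ} (hw : MonotoneOn w (Set.Iic K)) (k : Fin K) :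
    0 ≤ prefixDiff K w k :=
  sub_nonneg.2 (hw (Set.mem_Iic.2 k.isLt.le) (Set.mem_Iic.2 k.isLt) (Nat.le_succ _))

lemma prefixDiff_mem_Dfeas {w : ℕ → ℝ} {Pmax : ℝ} (h0 : w 0 = 0)
    (hw : MonotoneOn w (Set.Iic K)) (hK : w K ≤ Pmax) : prefixDiff K w ∈ Dfeas K Pmax :=
  ⟨prefixDiff_nonneg hw, (Sfun_prefixDiff h0 K le_rfl).trans_le hK⟩

section Potential

variable (g Q : Fin K → ℝ) (η Z : ℝ)

noncomputable def W (m : ℕ) (u : ℝ) : ℝ :=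
  if h : m < K then Q ⟨m, h⟩ * Real.log (u * g ⟨m, h⟩ + η) else Z * u

noncomputable def potential (w : ℕ → ℝ) : ℝ :=
  ∑ n ∈ range K, (W g Q η Z n (w (n + 1)) - W g Q η Z (n + 1) (w (n + 1))) - W g Q η Z 0 0

variable {g Q η Z}

lemma W_of_lt {m : ℕ} (h : m < K) (u : ℝ) :
    W g Q η Z m u = Q ⟨m, h⟩ * Real.log (u * g ⟨m, h⟩ + η) := dif_pos h

@[simp] lemma W_coe (k : Fin K) (u : ℝ) : W g Q η Z k u = Q k * Real.log (u * g k + η) :=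
  W_of_lt k.isLt u

@[simp] lemma W_self (u : ℝ) : W g Q η Z K u = Z * u := dif_neg (lt_irrefl K)

lemma Gfun_eq_Fobj (p : Fin K → ℝ) : Gfun K g Q η Z K p = Fobj K g Q η Z p := by
  simp only [Gfun, ff, Fin.is_lt, if_true, Fobj, Finset.sum_sub_distrib, ← Finset.mul_sum,
    Sfun_self]

lemma Fobj_eq_potential (hg : ∀ i, 0 < g i) (hη : 0 < η) {p : Fin K → ℝ} (hp : ∀ k, 0 ≤ p k) :
    Fobj K g Q η Z p = potential g Q η Z (Sfun K p) := by
  set c : ℕ → ℝ := fun n => W g Q η Z n (Sfun K p n)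
  have hlog : ∀ k : Fin K, Q k * Real.log (1 + p k * g k / (Sfun K p k * g k + η))
      = W g Q η Z k (Sfun K p (k + 1)) - c k := by
    intro k
    have hk : 0 < Sfun K p k * g k + η := by
      have := Sfun_nonneg hp k; have := hg k; positivity
    have hk1 : 0 < Sfun K p (k + 1) * g k + η := by
      have := Sfun_nonneg hp (k + 1); have := hg k; positivity
    have hratio : 1 + p k * g k / (Sfun K p k * g k + η)
        = (Sfun K p (k + 1) * g k + η) / (Sfun K p k * g k + η) := by
      rw [Sfun_succ, add_div' _ _ _ hk.ne']; ring
    rw [hratio, Real.log_div hk1.ne' hk.ne', mul_sub]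
    simp only [c, W_coe]
  have htele : ∑ n ∈ range K, c n + c K = c 0 + ∑ n ∈ range K, c (n + 1) := by
    rw [← Finset.sum_range_succ, Finset.sum_range_succ', add_comm]
  rw [Fobj, potential, Finset.sum_congr rfl fun k _ => hlog k,
    Fin.sum_univ_eq_sum_range (fun n => W g Q η Z n (Sfun K p (n + 1)) - c n) K]
  simp only [Finset.sum_sub_distrib] at htele ⊢
  simp only [c, W_self, Sfun_zero] at htele ⊢
  linarith

end Potential

lemma isCompact_Dfeas (Pmax : ℝ) : IsCompact (Dfeas K Pmax) := by
  have hclosed : IsClosed (Dfeas K Pmax) := by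
    simp only [Dfeas, Set.ofPred_and, Set.ofPred_forall]
    exact (isClosed_iInter fun k => isClosed_le continuous_const (continuous_apply k)).inter
      (isClosed_le (continuous_Sfun K) continuous_const)
  exact isCompact_Icc.of_isClosed_subset hclosed fun p hp =>
    ⟨hp.1, fun k => (le_Sfun_self hp.1 k).trans hp.2⟩

lemma continuousOn_Fobj {g : Fin K → ℝ} {η : ℝ} (Q : Fin K → ℝ) (Z : ℝ) (hg : ∀ i, 0 < g i)
    (hη : 0 < η) :
    ContinuousOn (Fobj K g Q η Z) {p | ∀ k, 0 ≤ p k} := by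
  have hden : ∀ p ∈ {p : Fin K → ℝ | ∀ k, 0 ≤ p k}, ∀ k : Fin K, 0 < Sfun K p k * g k + η :=
    fun p hp k => by have := Sfun_nonneg hp k; have := hg k; positivity
  refine ContinuousOn.sub (continuousOn_finsetSum _ fun k _ => ?_)
    ((continuous_Sfun K).const_mul Z).continuousOn
  refine continuousOn_const.mul (ContinuousOn.log ?_ fun p hp => ?_)
  · exact continuousOn_const.add (((continuous_apply k).mul continuous_const).continuousOn.div
      ((continuous_Sfun k).mul continuous_const |>.add continuous_const).continuousOn
      fun p hp => (hden p hp k).ne')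
  · have := div_nonneg (mul_nonneg (hp k) (hg k).le) (hden p hp k).le
    positivity

lemma exists_isMaxOn_Fobj {g : Fin K → ℝ} {η Pmax : ℝ} (Q : Fin K → ℝ) (Z : ℝ)
    (hg : ∀ i, 0 < g i) (hη : 0 < η) (hP : 0 ≤ Pmax) :
    ∃ p ∈ Dfeas K Pmax, IsMaxOn (Fobj K g Q η Z) (Dfeas K Pmax) p :=
  (isCompact_Dfeas Pmax).exists_isMaxOn ⟨0, fun _ => le_rfl, by simpa [Sfun] using hP⟩
    ((continuousOn_Fobj Q Z hg hη).mono fun _ hp => hp.1)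

lemma _root_.Monotone.exists_maximal_level_block {s : ℕ → ℝ} (hs : Monotone s) {m : ℕ}
    (hm : m ≤ K) (h0 : s 0 ≠ s m) :
    ∃ i j, 1 ≤ i ∧ i ≤ j ∧ j ≤ K ∧ (∀ n, i ≤ n → n ≤ j → s n = s m) ∧
      s (i - 1) < s m ∧ ∀ n, j < n → n ≤ K → s m < s n := by
  have hex : ∃ n, s n = s m := ⟨m, rfl⟩
  have hi : s (Nat.find hex) = s m := Nat.find_spec hex
  have hj : s (Nat.findGreatest (fun n => s n = s m) K) = s m :=
    Nat.findGreatest_spec (P := fun n => s n = s m) hm rfl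
  have hi0 : Nat.find hex ≠ 0 := fun h => h0 (h ▸ hi)
  refine ⟨Nat.find hex, Nat.findGreatest (fun n => s n = s m) K, by omega,
    Nat.find_min' hex hj, Nat.findGreatest_le K, fun n h1 h2 => ?_, ?_, fun n h1 h2 => ?_⟩
  · exact le_antisymm (hj ▸ hs h2) (hi ▸ hs h1)
  · exact (hi ▸ hs (Nat.sub_le _ 1)).lt_of_ne (Nat.find_min hex (by omega))
  · exact (hj ▸ hs h1.le).lt_of_ne fun h => Nat.findGreatest_is_greatest h1 h2 h.symm

def blockUpdate (w : ℕ → ℝ) (i j : ℕ) (u : ℝ) : ℕ → ℝ := fun n =>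
  if i ≤ n ∧ n ≤ j then u else w n

lemma blockUpdate_eq_self {w : ℕ → ℝ} {i j : ℕ} {t : ℝ} (h : ∀ n, i ≤ n → n ≤ j → w n = t) :
    blockUpdate w i j t = w := by
  funext n
  simp only [blockUpdate]
  split_ifs with hn
  exacts [(h n hn.1 hn.2).symm, rfl]

lemma monotoneOn_blockUpdate {w : ℕ → ℝ} (hw : Monotone w) {i j : ℕ} {u : ℝ} (hi : 1 ≤ i)
    (hlo : w (i - 1) ≤ u) (hhi : ∀ n, j < n → n ≤ K → u ≤ w n) :
    MonotoneOn (blockUpdate w i j u) (Set.Iic K) := by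
  intro n hn n' hn' hnn'
  simp only [blockUpdate]
  split_ifs with h h' h'
  · exact le_rfl
  · exact hhi n' (by omega) hn'
  · exact (hw (by omega)).trans hlo
  · exact hw hnn'

lemma potential_blockUpdate_sub (g Q : Fin K → ℝ) (η Z : ℝ) (w : ℕ → ℝ) {i j : ℕ} (hi : 1 ≤ i)
    (hij : i ≤ j) (hj : j ≤ K) (u v : ℝ) :
    potential g Q η Z (blockUpdate w i j u) - potential g Q η Z (blockUpdate w i j v)
      = (W g Q η Z (i - 1) u - W g Q η Z j u) - (W g Q η Z (i - 1) v - W g Q η Z j v) := by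
  set d : ℕ → ℝ := fun n => W g Q η Z n u - W g Q η Z n v
  have hterm : ∀ n ∈ range K,
      (W g Q η Z n (blockUpdate w i j u (n + 1)) - W g Q η Z (n + 1) (blockUpdate w i j u (n + 1)))
        - (W g Q η Z n (blockUpdate w i j v (n + 1))
          - W g Q η Z (n + 1) (blockUpdate w i j v (n + 1)))
      = if n ∈ Ico (i - 1) j then -(d (n + 1) - d n) else 0 := by
    intro n _
    simp only [blockUpdate, Finset.mem_Ico, d]
    split_ifs <;> first | omega | ring
  have hIco : range K ∩ Ico (i - 1) j = Ico (i - 1) j :=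
    Finset.inter_eq_right.2 fun n hn => Finset.mem_range.2 (by simp at hn; omega)
  rw [potential, potential, sub_sub_sub_cancel_right, ← Finset.sum_sub_distrib,
    Finset.sum_congr rfl hterm, Finset.sum_ite_mem, hIco, Finset.sum_neg_distrib,
    Finset.sum_Ico_sub _ (by omega)]
  ring

lemma hasDerivAt_const_mul_log_mul_add (A α η : ℝ) {x : ℝ} (hx : x * α + η ≠ 0) :
    HasDerivAt (fun u => A * Real.log (u * α + η)) (A * α / (x * α + η)) x := by
  simpa [mul_div_assoc] using ((((hasDerivAt_id x).mul_const α).add_const η).log hx).const_mul A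

section Optimality

variable {g Q : Fin K → ℝ} {η Z : ℝ}

lemma mem_Ecand_of_isLocalMax (hg : ∀ i, 0 < g i) (hQ : ∀ i j : Fin K, i ≠ j → Q i ≠ Q j)
    (hη : 0 < η) (hZ : Z ≠ 0) (Pmax : ℝ) {i j : ℕ} (hij : i < j) (hj : j ≤ K) {t : ℝ}
    (ht : 0 ≤ t) (hmax : IsLocalMax (fun u => W g Q η Z i u - W g Q η Z j u) t) :
    t ∈ Ecand K g Q η Z Pmax := by
  have hi : i < K := by omega
  have hti : 0 < t * g ⟨i, hi⟩ + η := by have := hg ⟨i, hi⟩; positivity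
  have hdi := hasDerivAt_const_mul_log_mul_add (Q ⟨i, hi⟩) (g ⟨i, hi⟩) η hti.ne'
  simp only [W_of_lt hi] at hmax
  rcases hj.lt_or_eq with hjK | rfl
  · have htj : 0 < t * g ⟨j, hjK⟩ + η := by have := hg ⟨j, hjK⟩; positivity
    have hQij : Q ⟨i, hi⟩ - Q ⟨j, hjK⟩ ≠ 0 :=
      sub_ne_zero.2 (hQ _ _ (Fin.ne_of_val_ne hij.ne))
    simp only [W_of_lt hjK] at hmax
    have hcrit := hmax.hasDerivAt_eq_zero
      (hdi.sub (hasDerivAt_const_mul_log_mul_add (Q ⟨j, hjK⟩) (g ⟨j, hjK⟩) η htj.ne'))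
    refine Or.inl (Or.inr ⟨⟨i, hi⟩, ⟨j, hjK⟩, hij, ?_⟩)
    have := hg ⟨i, hi⟩; have := hg ⟨j, hjK⟩
    field_simp at hcrit ⊢
    linear_combination hcrit
  · simp only [W_self] at hmax
    have hcrit := hmax.hasDerivAt_eq_zero (hdi.sub ((hasDerivAt_id t).const_mul Z))
    refine Or.inr ⟨⟨i, hi⟩, ?_⟩
    have := hg ⟨i, hi⟩
    field_simp at hcrit ⊢
    linear_combination -hcrit

lemma Fobj_prefixDiff (hg : ∀ i, 0 < g i) (hη : 0 < η) {w : ℕ → ℝ} (h0 : w 0 = 0)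
    (hw : MonotoneOn w (Set.Iic K)) :
    Fobj K g Q η Z (prefixDiff K w) = potential g Q η Z w := by
  rw [Fobj_eq_potential hg hη (prefixDiff_nonneg hw), potential, potential]
  congr 1
  refine Finset.sum_congr rfl fun n hn => ?_
  rw [Sfun_prefixDiff h0 (n + 1) (Finset.mem_range.1 hn)]

lemma Sfun_mem_Ecand_of_isMaxOn (hg : ∀ i, 0 < g i) (hQ : ∀ i j : Fin K, i ≠ j → Q i ≠ Q j)
    (hη : 0 < η) (hZ : Z ≠ 0) {Pmax : ℝ} {p : Fin K → ℝ} (hp : p ∈ Dfeas K Pmax)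
    (hmax : IsMaxOn (Fobj K g Q η Z) (Dfeas K Pmax) p) {m : ℕ} (hm : m ≤ K) :
    Sfun K p m ∈ Ecand K g Q η Z Pmax := by
  set s := Sfun K p
  have hs : Monotone s := Sfun_mono hp.1
  by_cases h0 : s m = 0
  · exact Or.inl (Or.inl (Or.inl h0))
  by_cases hP : s m = Pmax
  · exact Or.inl (Or.inl (Or.inr hP))
  obtain ⟨i, j, hi, hij, hjK, hblock, hbelow, habove⟩ :=
    hs.exists_maximal_level_block hm ((Sfun_zero p).trans_ne (Ne.symm h0))
  have htP : s m < Pmax := ((hs hm).trans hp.2).lt_of_ne hP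
  have hFp : Fobj K g Q η Z p = potential g Q η Z (blockUpdate s i j (s m)) := by
    rw [blockUpdate_eq_self hblock, Fobj_eq_potential hg hη hp.1]
  -- Moving the whole level block `S_i = ⋯ = S_j` to a nearby common value keeps `p` feasible.
  have hloc : IsLocalMax (fun u => W g Q η Z (i - 1) u - W g Q η Z j u) (s m) := by
    have hev : ∀ᶠ u in nhds (s m), s (i - 1) ≤ u ∧ u ≤ Pmax ∧ ∀ n ∈ Ioc j K, u ≤ s n :=
      (eventually_ge_nhds hbelow).and ((eventually_le_nhds htP).and
        ((Filter.eventually_all_finset _).2 fun n hn =>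
          eventually_le_nhds (habove n (Finset.mem_Ioc.1 hn).1 (Finset.mem_Ioc.1 hn).2)))
    filter_upwards [hev] with u ⟨hlo, huP, hhi⟩
    have hw0 : blockUpdate s i j u 0 = 0 := by
      rw [blockUpdate, if_neg (by omega)]
      exact Sfun_zero p
    have hw : MonotoneOn (blockUpdate s i j u) (Set.Iic K) :=
      monotoneOn_blockUpdate hs hi hlo fun n h1 h2 => hhi n (Finset.mem_Ioc.2 ⟨h1, h2⟩)
    have hwK : blockUpdate s i j u K ≤ Pmax := by
      simp only [blockUpdate]
      split_ifs
      exacts [huP, hp.2]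
    have hle : Fobj K g Q η Z (prefixDiff K (blockUpdate s i j u)) ≤ Fobj K g Q η Z p :=
      hmax (prefixDiff_mem_Dfeas hw0 hw hwK)
    have hdiff := potential_blockUpdate_sub g Q η Z s hi hij hjK u (s m)
    rw [Fobj_prefixDiff hg hη hw0 hw] at hle
    linarith
  exact mem_Ecand_of_isLocalMax hg hQ hη hZ Pmax (by omega) hjK (Sfun_nonneg hp.1 m) hloc

end Optimality

end DPPA

open DPPA

theorem dppa_correctness_general
    (K : ℕ) (g Q : Fin K → ℝ) (η Z Pmax : ℝ)
    (hgpos : ∀ i, 0 < g i)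
    (hQdist : ∀ i j : Fin K, i ≠ j → Q i ≠ Q j)
    (hη : 0 < η) (hZ : 0 < Z) (hP : 0 < Pmax)
    (L : ℕ) (π : Fin L → ℝ)
    (hπrange : Set.range π = Ecand K g Q η Z Pmax ∩ Set.Icc (0 : ℝ) Pmax)
    (H : Fin L → ℝ)
    (hH : ∀ l : Fin L,
      IsGreatest {y | ∃ p : Fin K → ℝ,
        ((∀ j : Fin K, 0 ≤ p j) ∧ Sfun K p K = π l ∧
          (∀ k' : ℕ, 1 ≤ k' → k' ≤ K → Sfun K p k' ∈ Set.range π)) ∧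
        y = Gfun K g Q η Z K p} (H l)) :
    ∃ M : ℝ, IsGreatest (Fobj K g Q η Z '' Dfeas K Pmax) M ∧
      IsGreatest (Set.range H) M := by
  obtain ⟨p, hp, hpmax⟩ := exists_isMaxOn_Fobj Q Z hgpos hη hP.le
  have hSπ : ∀ m ≤ K, Sfun K p m ∈ Set.range π := fun m hm => hπrange ▸
    ⟨Sfun_mem_Ecand_of_isMaxOn hgpos hQdist hη hZ.ne' hp hpmax hm, Sfun_nonneg hp.1 m,
      (Sfun_mono hp.1 hm).trans hp.2⟩
  have hH_le : ∀ l, H l ≤ Fobj K g Q η Z p := by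
    intro l
    obtain ⟨q, ⟨hq, hqK, -⟩, hHq⟩ := (hH l).1
    have hπl : π l ∈ Ecand K g Q η Z Pmax ∩ Set.Icc 0 Pmax := hπrange ▸ Set.mem_range_self l
    rw [hHq, Gfun_eq_Fobj]
    exact hpmax ⟨hq, hqK ▸ hπl.2.2⟩
  obtain ⟨l, hl⟩ := hSπ K le_rfl
  have hHl : H l = Fobj K g Q η Z p := le_antisymm (hH_le l)
    ((hH l).2 ⟨p, ⟨hp.1, hl.symm, fun k _ hk => hSπ k hk⟩, (Gfun_eq_Fobj p).symm⟩)
  refine ⟨_, ⟨Set.mem_image_of_mem _ hp, ?_⟩, ⟨l, hHl⟩, ?_⟩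
  · rintro _ ⟨q, hq, rfl⟩
    exact hpmax hq
  · rintro _ ⟨l', rfl⟩
    exact hH_le l'

/-- **Correctness of the dynamic-programming based power allocation.** With
`π_1 < ⋯ < π_L` listing `Ẽ = E ∩ [0, P_max]` and `H(l, K)` the maximum of subproblem
SP-`l`-`K`, the objective `F` attains its maximum over `D`, and
`max_{p ∈ D} F(p) = max_{1 ≤ l ≤ L} H(l, K)`. -/
theorem dppa_correctness
    (K : ℕ) (hK : 1 ≤ K) (g Q : Fin K → ℝ) (η Z Pmax : ℝ)
    (hg : ∀ i j : Fin K, i ≤ j → g j ≤ g i) (hgpos : ∀ i, 0 < g i)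
    (hQpos : ∀ i, 0 < Q i) (hQdist : ∀ i j : Fin K, i ≠ j → Q i ≠ Q j)
    (hη : 0 < η) (hZ : 0 < Z) (hP : 0 < Pmax)
    (L : ℕ) (π : Fin L → ℝ) (hπ : StrictMono π)
    (hπrange : Set.range π = Ecand K g Q η Z Pmax ∩ Set.Icc (0 : ℝ) Pmax)
    (H : Fin L → ℝ)
    (hH : ∀ l : Fin L,
      IsGreatest {y | ∃ p : Fin K → ℝ,
        ((∀ j : Fin K, 0 ≤ p j) ∧ Sfun K p K = π l ∧
          (∀ k' : ℕ, 1 ≤ k' → k' ≤ K → Sfun K p k' ∈ Set.range π)) ∧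
        y = Gfun K g Q η Z K p} (H l)) :
    ∃ M : ℝ, IsGreatest (Fobj K g Q η Z '' Dfeas K Pmax) M ∧
      IsGreatest (Set.range H) M :=
  dppa_correctness_general K g Q η Z Pmax hgpos hQdist hη hZ hP L π hπrange H hH
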